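/- arXiv:2102.01359 — 2 statements merged into one kernel-verified Lean document; each statement's English description precedes it below -/
import Mathlib

section
/- Let R be a unital associative superalgebra over a ring k with 2 invertible and n ≥ 2. Then sq_n(R) = { [[A,B],[ρ(B),ρ(A)]] : A,B ∈ M_n(R), Tr(B) ∈ [R,R] }, where [R,R] is the k-span of all graded commutators in R. -/
variable {k : Type} [CommRing k] [Invertible (2 : k)]
variable {R : Type} [Ring R] [Algebra k R]

/-- The multiplication of the graded tensor product `R ⊗ Q1`, in the model where
`(a, b)` represents `a ⊗ 1 + b ⊗ ν` (with `ν` odd, `ν² = 1`, Koszul signs via the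
grading involution `σ` of `R`). -/
def mulQ (σ : R ≃ₐ[k] R) (p q : R × R) : R × R :=
  (p.1 * q.1 + p.2 * σ q.2, p.1 * q.2 + p.2 * σ q.1)

/-- The grading involution of `R ⊗ Q1` in the model above. -/
def tauQ (σ : R ≃ₐ[k] R) (p : R × R) : R × R := (σ p.1, -σ p.2)

/-- The grading involution of `R ⊗ Q1` as a `k`-linear map. -/
def tauL (σ : R ≃ₐ[k] R) : (R × R) →ₗ[k] (R × R) :=
  LinearMap.prod (σ.toLinearMap ∘ₗ LinearMap.fst k R R)
    (-(σ.toLinearMap ∘ₗ LinearMap.snd k R R))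

/-- The queer Lie superalgebra `q_n(A)` coordinatized by a superalgebra `A` with grading
involution `s`: block matrices `[[A,B],[ρ(B),ρ(A)]]` inside `gl_{n|n}(A)`, where `ρ = s`
entrywise (so `ρ(a) = (-1)^{|a|} a` on homogeneous elements). -/
def qSub (n : ℕ) (A : Type) [AddCommGroup A] [Module k A] (s : A →ₗ[k] A) :
    Submodule k (Matrix (Fin n ⊕ Fin n) (Fin n ⊕ Fin n) A) where
  carrier := {M | (∀ i j, M (Sum.inr i) (Sum.inr j) = s (M (Sum.inl i) (Sum.inl j))) ∧
                  (∀ i j, M (Sum.inr i) (Sum.inl j) = s (M (Sum.inl i) (Sum.inr j)))}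
  add_mem' := by
    intro M N hM hN
    exact ⟨fun i j => by simp [Matrix.add_apply, hM.1 i j, hN.1 i j],
           fun i j => by simp [Matrix.add_apply, hM.2 i j, hN.2 i j]⟩
  zero_mem' := ⟨fun i j => by simp, fun i j => by simp⟩
  smul_mem' := by
    intro c M hM
    exact ⟨fun i j => by simp [Matrix.smul_apply, hM.1 i j],
           fun i j => by simp [Matrix.smul_apply, hM.2 i j]⟩

/-- The grading involution of `gl_{n|n}(A)`: the parity of `e_{ij}(a)` is `|i| + |j| + |a|`,
so the involution applies `s` entrywise with a sign `-1` on the off-diagonal blocks. -/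
def gInvMat {n : ℕ} {A : Type} [Neg A] (s : A → A)
    (M : Matrix (Fin n ⊕ Fin n) (Fin n ⊕ Fin n) A) :
    Matrix (Fin n ⊕ Fin n) (Fin n ⊕ Fin n) A :=
  Matrix.of fun i j => if i.isLeft = j.isLeft then s (M i j) else -(s (M i j))

/-- The set of graded commutators `[x,y] = xy - (-1)^{|x||y|} yx` of homogeneous elements of
a submodule `V` of `gl_{n|n}(A)` (homogeneity w.r.t. the grading involution `gInvMat s`). -/
def gBrSet (n : ℕ) {A : Type} [Ring A] [Module k A]
    (s : A → A) (V : Submodule k (Matrix (Fin n ⊕ Fin n) (Fin n ⊕ Fin n) A)) :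
    Set (Matrix (Fin n ⊕ Fin n) (Fin n ⊕ Fin n) A) :=
  {z | ∃ x ∈ V, ∃ y ∈ V, ∃ px py : ZMod 2,
    gInvMat s x = ((-1 : ℤ) ^ px.val) • x ∧ gInvMat s y = ((-1 : ℤ) ^ py.val) • y ∧
    z = x * y - ((-1 : ℤ) ^ (px * py).val) • (y * x)}

/-- The derived sub-superalgebra `[V, V]`: the span of graded commutators of homogeneous
elements of `V`. -/
def derivedSub (n : ℕ) {A : Type} [Ring A] [Module k A]
    (s : A → A) (V : Submodule k (Matrix (Fin n ⊕ Fin n) (Fin n ⊕ Fin n) A)) :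
    Submodule k (Matrix (Fin n ⊕ Fin n) (Fin n ⊕ Fin n) A) :=
  Submodule.span k (gBrSet n s V)

/-- The set of graded commutators of homogeneous elements of `R`. -/
def gcSet (A : Type) [AddCommGroup A] (mul : A → A → A) (s : A → A) : Set A :=
  {z | ∃ x y : A, ∃ px py : ZMod 2,
    s x = ((-1 : ℤ) ^ px.val) • x ∧ s y = ((-1 : ℤ) ^ py.val) • y ∧
    z = mul x y - ((-1 : ℤ) ^ (px * py).val) • mul y x}

/-- The linear map sending `[[A,B],[ρ(B),ρ(A)]]` to `Tr(B)`, the trace of the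
upper-right block. -/
def trUR (n : ℕ) : Matrix (Fin n ⊕ Fin n) (Fin n ⊕ Fin n) R →ₗ[k] R where
  toFun M := ∑ i, M (Sum.inl i) (Sum.inr i)
  map_add' := by intro M N; simp [Matrix.add_apply, Finset.sum_add_distrib]
  map_smul' := by intro c M; simp [Matrix.smul_apply, Finset.smul_sum]

/-!
Write `E⁰ᵢⱼ(a) = [[eᵢⱼ a, 0], [0, eᵢⱼ ρ(a)]]` and `E¹ᵢⱼ(a) = [[0, eᵢⱼ a], [eᵢⱼ ρ(a), 0]]`.

`⊆`: `q_n(R)` is closed under products, and in the upper-right trace of a supercommutator of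
homogeneous elements of `q_n(R)` the summands pair off into graded commutators of entries.

`⊇`: for homogeneous `a` and `i ≠ j`, the elements `E⁰ᵢⱼ(a)`, `E¹ᵢⱼ(a)` and `E¹ᵢᵢ(a) - E¹ⱼⱼ(a)`
are supercommutators with some `E⁰(1)`, while `[E¹ᵢᵢ(a), E¹ᵢᵢ(1)] = 2 E⁰ᵢᵢ(a)` and
`[E⁰ᵢᵢ(x), E¹ᵢᵢ(y)] = E¹ᵢᵢ([x, y])`. Since `2` is invertible every `a` is a sum of homogeneous
parts, so every element of `q_n(R)` is congruent modulo `sq_n(R)` to `E¹ᵢ₀ᵢ₀(Tr B)`.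
-/

open Matrix Sum

local notation "ε" p:max => ((-1 : ℤ) ^ ZMod.val p)

theorem neg_one_pow_zmod_two_val_add (p q : ZMod 2) : ε (p + q) = ε p * ε q := by
  revert p q; decide

theorem neg_one_pow_zmod_two_val_mul_self (p : ZMod 2) : ε p * ε p = 1 := by
  revert p; decide

section GradedCommutator

variable {σ : R ≃ₐ[k] R}

theorem map_mem_of_forall_homogeneous (hσ : ∀ a, σ (σ a) = a) {M : Type} [AddCommGroup M]
    [Module k M] (f : R →ₗ[k] M) {S : Submodule k M}
    (hf : ∀ (p : ZMod 2) (a : R), σ a = ε p • a → f a ∈ S) (a : R) : f a ∈ S := by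
  have h_even : σ (⅟(2 : k) • (a + σ a)) = ε (0 : ZMod 2) • ⅟(2 : k) • (a + σ a) := by
    rw [map_smul, map_add, hσ, add_comm, show ε (0 : ZMod 2) = 1 by decide, one_smul]
  have h_odd : σ (⅟(2 : k) • (a - σ a)) = ε (1 : ZMod 2) • ⅟(2 : k) • (a - σ a) := by
    rw [map_smul, map_sub, hσ, ← neg_sub, smul_neg, show ε (1 : ZMod 2) = -1 by decide,
      neg_one_smul]
  have h_sum : ⅟(2 : k) • (a + σ a) + ⅟(2 : k) • (a - σ a) = a := by
    rw [← smul_add, add_add_sub_cancel, ← two_smul k a, invOf_smul_smul]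
  rw [← h_sum, map_add]
  exact add_mem (hf 0 _ h_even) (hf 1 _ h_odd)

omit [Invertible (2 : k)]

theorem gradedCommutator_mem_span {a b : R} {p q : ZMod 2} (ha : σ a = ε p • a)
    (hb : σ b = ε q • b) :
    a * b - ε (p * q) • (b * a) ∈ Submodule.span k (gcSet R (· * ·) σ) :=
  Submodule.subset_span ⟨a, b, p, q, ha, hb, rfl⟩

/-- The `(i, u)` summand of the upper-right trace of `xy - ± yx`, where `a = A_iu`, `b = B_iu`
are entries of `x` and `a' = A'_ui`, `b' = B'_ui` entries of `y`. -/
theorem traceSummand_mem_span {a b a' b' : R} {p q : ZMod 2} (ha : σ a = ε p • a)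
    (hb : σ b = ε (p + 1) • b) (ha' : σ a' = ε q • a') (hb' : σ b' = ε (q + 1) • b') :
    (a * b' + b * σ a') - ε (p * q) • (a' * b + b' * σ a)
      ∈ Submodule.span k (gcSet R (· * ·) σ) := by
  have h_split : (a * b' + b * σ a') - ε (p * q) • (a' * b + b' * σ a) =
      (a * b' - ε (p * (q + 1)) • (b' * a))
        - ε (p * q) • (a' * b - ε (q * (p + 1)) • (b * a')) := by
    rw [ha, ha', mul_add, mul_add, mul_one, mul_one, mul_comm q p, neg_one_pow_zmod_two_val_add,
      neg_one_pow_zmod_two_val_add]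
    simp only [mul_smul_comm, smul_add, smul_sub, smul_smul]
    rw [← mul_assoc, neg_one_pow_zmod_two_val_mul_self, one_mul]
    abel
  rw [h_split]
  exact sub_mem (gradedCommutator_mem_span ha hb')
    (zsmul_mem (gradedCommutator_mem_span ha' hb) _)

end GradedCommutator

section QueerMatrices

variable {σ : R ≃ₐ[k] R} {n : ℕ}

local notation "𝔮" => qSub n R (AlgEquiv.toLinearMap σ)

local notation "𝔰𝔮" => derivedSub n σ (qSub n R (AlgEquiv.toLinearMap σ))

section

omit [Invertible (2 : k)]

theorem mem_qSub {M : Matrix (Fin n ⊕ Fin n) (Fin n ⊕ Fin n) R} :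
    M ∈ 𝔮 ↔ (∀ i j, M (inr i) (inr j) = σ (M (inl i) (inl j))) ∧
      (∀ i j, M (inr i) (inl j) = σ (M (inl i) (inr j))) :=
  Iff.rfl

theorem qSub_mul_mem (hσ : ∀ a, σ (σ a) = a)
    {x y : Matrix (Fin n ⊕ Fin n) (Fin n ⊕ Fin n) R} (hx : x ∈ 𝔮) (hy : y ∈ 𝔮) : x * y ∈ 𝔮 := by
  obtain ⟨hx₁, hx₂⟩ := mem_qSub.1 hx
  obtain ⟨hy₁, hy₂⟩ := mem_qSub.1 hy
  refine mem_qSub.2 ⟨fun i j => ?_, fun i j => ?_⟩ <;>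
    simp only [Matrix.mul_apply, Fintype.sum_sum_type, map_add, map_sum, map_mul,
      hx₁, hx₂, hy₁, hy₂, hσ] <;>
    exact add_comm _ _

theorem homogeneous_apply_inl_inl {x : Matrix (Fin n ⊕ Fin n) (Fin n ⊕ Fin n) R}
    {p : ZMod 2} (h : gInvMat σ x = ε p • x) (u v : Fin n) :
    σ (x (inl u) (inl v)) = ε p • x (inl u) (inl v) := by
  simpa [gInvMat] using congr_fun₂ h (inl u) (inl v)

theorem homogeneous_apply_inl_inr {x : Matrix (Fin n ⊕ Fin n) (Fin n ⊕ Fin n) R}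
    {p : ZMod 2} (h : gInvMat σ x = ε p • x) (u v : Fin n) :
    σ (x (inl u) (inr v)) = ε (p + 1) • x (inl u) (inr v) := by
  have h_entry := congr_fun₂ h (inl u) (inr v)
  simp only [gInvMat, Matrix.of_apply, isLeft_inl, isLeft_inr, Bool.true_eq_false,
    if_false, Matrix.smul_apply] at h_entry
  rw [neg_one_pow_zmod_two_val_add, show ε (1 : ZMod 2) = -1 by decide, mul_neg_one, neg_smul,
    ← h_entry, neg_neg]

theorem trUR_mul {x y : Matrix (Fin n ⊕ Fin n) (Fin n ⊕ Fin n) R} (hy : y ∈ 𝔮) :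
    trUR (k := k) n (x * y) = ∑ i, ∑ u,
      (x (inl i) (inl u) * y (inl u) (inr i) + x (inl i) (inr u) * σ (y (inl u) (inl i))) := by
  simp only [trUR, LinearMap.coe_mk, AddHom.coe_mk, Matrix.mul_apply, Fintype.sum_sum_type,
    (mem_qSub.1 hy).1, Finset.sum_add_distrib]

theorem trUR_supercommutator_mem_span {x y : Matrix (Fin n ⊕ Fin n) (Fin n ⊕ Fin n) R}
    (hx : x ∈ 𝔮) (hy : y ∈ 𝔮) {p q : ZMod 2} (hpx : gInvMat σ x = ε p • x)
    (hqy : gInvMat σ y = ε q • y) :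
    trUR (k := k) n (x * y - ε (p * q) • (y * x)) ∈ Submodule.span k (gcSet R (· * ·) σ) := by
  rw [map_sub, map_zsmul, trUR_mul hy, trUR_mul hx, Finset.sum_comm,
    Finset.smul_sum, ← Finset.sum_sub_distrib]
  refine Submodule.sum_mem _ fun i _ => ?_
  rw [Finset.smul_sum, ← Finset.sum_sub_distrib]
  exact Submodule.sum_mem _ fun u _ => traceSummand_mem_span
    (homogeneous_apply_inl_inl hpx u i) (homogeneous_apply_inl_inr hpx u i)
    (homogeneous_apply_inl_inl hqy i u) (homogeneous_apply_inl_inr hqy i u)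

def evenSingle (σ : R ≃ₐ[k] R) (n : ℕ) (i j : Fin n) :
    R →ₗ[k] Matrix (Fin n ⊕ Fin n) (Fin n ⊕ Fin n) R where
  toFun a := single (inl i) (inl j) a + single (inr i) (inr j) (σ a)
  map_add' a b := by simp only [map_add, single_add]; abel
  map_smul' c a := by simp [smul_single, smul_add]

def oddSingle (σ : R ≃ₐ[k] R) (n : ℕ) (i j : Fin n) :
    R →ₗ[k] Matrix (Fin n ⊕ Fin n) (Fin n ⊕ Fin n) R where
  toFun a := single (inl i) (inr j) a + single (inr i) (inl j) (σ a)
  map_add' a b := by simp only [map_add, single_add]; abel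
  map_smul' c a := by simp [smul_single, smul_add]

theorem evenSingle_apply (i j : Fin n) (a : R) :
    evenSingle σ n i j a = single (inl i) (inl j) a + single (inr i) (inr j) (σ a) :=
  rfl

theorem oddSingle_apply (i j : Fin n) (a : R) :
    oddSingle σ n i j a = single (inl i) (inr j) a + single (inr i) (inl j) (σ a) :=
  rfl

theorem evenSingle_mem (i j : Fin n) (a : R) : evenSingle σ n i j a ∈ 𝔮 := by
  refine mem_qSub.2 ⟨fun u v => ?_, fun u v => ?_⟩ <;>
    simp [evenSingle_apply, single_apply, apply_ite σ]

theorem oddSingle_mem (i j : Fin n) (a : R) : oddSingle σ n i j a ∈ 𝔮 := by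
  refine mem_qSub.2 ⟨fun u v => ?_, fun u v => ?_⟩ <;>
    simp [oddSingle_apply, single_apply, apply_ite σ]

theorem evenSingle_homogeneous {p : ZMod 2} {a : R} (ha : σ a = ε p • a) (i j : Fin n) :
    gInvMat σ (evenSingle σ n i j a) = ε p • evenSingle σ n i j a := by
  rw [← map_zsmul, ← ha]
  ext u v
  rcases u with u | u <;> rcases v with v | v <;>
    simp [gInvMat, evenSingle_apply, single_apply, apply_ite σ]

theorem oddSingle_homogeneous {p : ZMod 2} {a : R} (ha : σ a = ε p • a) (i j : Fin n) :
    gInvMat σ (oddSingle σ n i j a) = ε (p + 1) • oddSingle σ n i j a := by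
  rw [neg_one_pow_zmod_two_val_add, show ε (1 : ZMod 2) = -1 by decide, mul_neg_one, neg_smul,
    ← map_zsmul, ← ha]
  ext u v
  rcases u with u | u <;> rcases v with v | v <;>
    simp [gInvMat, oddSingle_apply, single_apply, apply_ite σ]

theorem evenSingle_one_homogeneous (i j : Fin n) :
    gInvMat σ (evenSingle σ n i j 1) = ε (0 : ZMod 2) • evenSingle σ n i j 1 :=
  evenSingle_homogeneous (σ := σ) (a := 1) (by simp) i j

theorem oddSingle_one_homogeneous (i j : Fin n) :
    gInvMat σ (oddSingle σ n i j 1) = ε (1 : ZMod 2) • oddSingle σ n i j 1 := by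
  simpa using oddSingle_homogeneous (σ := σ) (p := 0) (a := 1) (by simp) i j

theorem evenSingle_mul_evenSingle (i j l : Fin n) (a b : R) :
    evenSingle σ n i j a * evenSingle σ n j l b = evenSingle σ n i l (a * b) := by
  simp [evenSingle_apply, add_mul, mul_add]

theorem evenSingle_mul_oddSingle (i j l : Fin n) (a b : R) :
    evenSingle σ n i j a * oddSingle σ n j l b = oddSingle σ n i l (a * b) := by
  simp [evenSingle_apply, oddSingle_apply, add_mul, mul_add]

theorem oddSingle_mul_evenSingle (hσ : ∀ a, σ (σ a) = a) (i j l : Fin n) (a b : R) :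
    oddSingle σ n i j a * evenSingle σ n j l b = oddSingle σ n i l (a * σ b) := by
  simp [evenSingle_apply, oddSingle_apply, add_mul, mul_add, hσ]
  abel

theorem oddSingle_mul_oddSingle (hσ : ∀ a, σ (σ a) = a) (i j l : Fin n) (a b : R) :
    oddSingle σ n i j a * oddSingle σ n j l b = evenSingle σ n i l (a * σ b) := by
  simp [evenSingle_apply, oddSingle_apply, add_mul, mul_add, hσ]
  abel

theorem evenSingle_mul_evenSingle_of_ne {j j' : Fin n} (h : j ≠ j') (i l : Fin n) (a b : R) :
    evenSingle σ n i j a * evenSingle σ n j' l b = 0 := by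
  simp [evenSingle_apply, add_mul, mul_add, single_mul_single_of_ne, h]

theorem evenSingle_mul_oddSingle_of_ne {j j' : Fin n} (h : j ≠ j') (i l : Fin n) (a b : R) :
    evenSingle σ n i j a * oddSingle σ n j' l b = 0 := by
  simp [evenSingle_apply, oddSingle_apply, add_mul, mul_add, single_mul_single_of_ne, h]

theorem supercommutator_mem_derivedSub {x y : Matrix (Fin n ⊕ Fin n) (Fin n ⊕ Fin n) R}
    (hx : x ∈ 𝔮) (hy : y ∈ 𝔮) {p q : ZMod 2} (hpx : gInvMat σ x = ε p • x)
    (hqy : gInvMat σ y = ε q • y) : x * y - ε (p * q) • (y * x) ∈ 𝔰𝔮 :=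
  Submodule.subset_span ⟨x, hx, y, hy, p, q, hpx, hqy, rfl⟩

theorem evenSingle_mem_derivedSub_of_ne_of_homogeneous {p : ZMod 2} {a : R}
    (ha : σ a = ε p • a) {i j : Fin n} (hij : i ≠ j) : evenSingle σ n i j a ∈ 𝔰𝔮 := by
  have h := supercommutator_mem_derivedSub (evenSingle_mem i i a) (evenSingle_mem i j 1)
    (evenSingle_homogeneous ha i i) (evenSingle_one_homogeneous i j)
  rwa [evenSingle_mul_evenSingle, mul_one, evenSingle_mul_evenSingle_of_ne hij.symm, smul_zero,
    sub_zero] at h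

theorem oddSingle_mem_derivedSub_of_ne_of_homogeneous (hσ : ∀ a, σ (σ a) = a) {p : ZMod 2}
    {a : R} (ha : σ a = ε p • a) {i j : Fin n} (hij : i ≠ j) : oddSingle σ n i j a ∈ 𝔰𝔮 := by
  have h := supercommutator_mem_derivedSub (oddSingle_mem i i a) (evenSingle_mem i j 1)
    (oddSingle_homogeneous ha i i) (evenSingle_one_homogeneous i j)
  rwa [oddSingle_mul_evenSingle hσ, map_one, mul_one, evenSingle_mul_oddSingle_of_ne hij.symm,
    smul_zero, sub_zero] at h

theorem oddSingle_sub_oddSingle_mem_derivedSub_of_homogeneous (hσ : ∀ a, σ (σ a) = a)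
    {p : ZMod 2} {a : R} (ha : σ a = ε p • a) (i j : Fin n) :
    oddSingle σ n i i a - oddSingle σ n j j a ∈ 𝔰𝔮 := by
  have h := supercommutator_mem_derivedSub (oddSingle_mem i j a) (evenSingle_mem j i 1)
    (oddSingle_homogeneous ha i j) (evenSingle_one_homogeneous j i)
  rwa [oddSingle_mul_evenSingle hσ, map_one, mul_one, evenSingle_mul_oddSingle, one_mul,
    mul_zero, ZMod.val_zero, pow_zero, one_smul] at h

theorem span_gcSet_le_comap_oddSingle (hσ : ∀ a, σ (σ a) = a) (i : Fin n) :
    Submodule.span k (gcSet R (· * ·) σ) ≤ Submodule.comap (oddSingle σ n i i) 𝔰𝔮 := by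
  rw [Submodule.span_le]
  rintro _ ⟨x, y, p, q, hx, hy, rfl⟩
  show oddSingle σ n i i (x * y - ε (p * q) • (y * x)) ∈ 𝔰𝔮
  have h := supercommutator_mem_derivedSub (evenSingle_mem i i x) (oddSingle_mem i i y)
    (evenSingle_homogeneous hx i i) (oddSingle_homogeneous hy i i)
  rwa [evenSingle_mul_oddSingle, oddSingle_mul_evenSingle hσ, hx, mul_smul_comm, map_zsmul,
    smul_smul, mul_add, mul_one, neg_one_pow_zmod_two_val_add, mul_assoc,
    neg_one_pow_zmod_two_val_mul_self, mul_one, ← map_zsmul, ← map_sub] at h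

theorem eq_sum_evenSingle_add_sum_oddSingle {M : Matrix (Fin n ⊕ Fin n) (Fin n ⊕ Fin n) R}
    (hM : M ∈ 𝔮) :
    M = ∑ i, ∑ j, evenSingle σ n i j (M (inl i) (inl j))
      + ∑ i, ∑ j, oddSingle σ n i j (M (inl i) (inr j)) := by
  obtain ⟨h₁, h₂⟩ := mem_qSub.1 hM
  ext u v
  rcases u with u | u <;> rcases v with v | v <;>
    simp [Matrix.sum_apply, evenSingle_apply, oddSingle_apply, single_apply, ite_and, h₁, h₂,
      Finset.sum_ite_eq, eq_comm]

end

theorem evenSingle_mem_derivedSub_of_homogeneous (hσ : ∀ a, σ (σ a) = a) {p : ZMod 2}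
    {a : R} (ha : σ a = ε p • a) (i j : Fin n) : evenSingle σ n i j a ∈ 𝔰𝔮 := by
  rcases eq_or_ne i j with rfl | hij
  · have h := supercommutator_mem_derivedSub (oddSingle_mem i i a) (oddSingle_mem i i 1)
      (oddSingle_homogeneous ha i i) (oddSingle_one_homogeneous i i)
    rw [oddSingle_mul_oddSingle hσ, oddSingle_mul_oddSingle hσ, map_one, mul_one, one_mul, ha,
      map_zsmul, smul_smul, mul_one, neg_one_pow_zmod_two_val_add, mul_right_comm,
      neg_one_pow_zmod_two_val_mul_self, one_mul, show ε (1 : ZMod 2) = -1 by decide, neg_smul,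
      one_smul, sub_neg_eq_add, ← two_smul k] at h
    simpa using Submodule.smul_mem _ (⅟(2 : k)) h
  · exact evenSingle_mem_derivedSub_of_ne_of_homogeneous ha hij

theorem evenSingle_mem_derivedSub (hσ : ∀ a, σ (σ a) = a) (i j : Fin n) (a : R) :
    evenSingle σ n i j a ∈ 𝔰𝔮 :=
  map_mem_of_forall_homogeneous hσ _
    (fun _ _ ha => evenSingle_mem_derivedSub_of_homogeneous hσ ha i j) a

theorem oddSingle_mem_derivedSub_of_ne (hσ : ∀ a, σ (σ a) = a) {i j : Fin n} (hij : i ≠ j)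
    (a : R) : oddSingle σ n i j a ∈ 𝔰𝔮 :=
  map_mem_of_forall_homogeneous hσ _
    (fun _ _ ha => oddSingle_mem_derivedSub_of_ne_of_homogeneous hσ ha hij) a

theorem oddSingle_sub_oddSingle_mem_derivedSub (hσ : ∀ a, σ (σ a) = a) (i j : Fin n) (a : R) :
    oddSingle σ n i i a - oddSingle σ n j j a ∈ 𝔰𝔮 :=
  map_mem_of_forall_homogeneous hσ (oddSingle σ n i i - oddSingle σ n j j)
    (fun _ _ ha => oddSingle_sub_oddSingle_mem_derivedSub_of_homogeneous hσ ha i j) a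

theorem sum_oddSingle_sub_oddSingle_sum_diag_mem_derivedSub (hσ : ∀ a, σ (σ a) = a)
    (B : Fin n → Fin n → R) (i₀ : Fin n) :
    ∑ i, ∑ j, oddSingle σ n i j (B i j) - oddSingle σ n i₀ i₀ (∑ i, B i i) ∈ 𝔰𝔮 := by
  have h_diag : oddSingle σ n i₀ i₀ (∑ i, B i i)
      = ∑ i, ∑ j, if i = j then oddSingle σ n i₀ i₀ (B i j) else 0 := by
    simp [map_sum]
  rw [h_diag, ← Finset.sum_sub_distrib]
  refine Submodule.sum_mem _ fun i _ => ?_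
  rw [← Finset.sum_sub_distrib]
  refine Submodule.sum_mem _ fun j _ => ?_
  rcases eq_or_ne i j with rfl | hij
  · rw [if_pos rfl]
    exact oddSingle_sub_oddSingle_mem_derivedSub hσ i i₀ _
  · rw [if_neg hij, sub_zero]
    exact oddSingle_mem_derivedSub_of_ne hσ hij _

end QueerMatrices

theorem sq_characterization_general (σ : R ≃ₐ[k] R) (hσ : ∀ a, σ (σ a) = a) (n : ℕ) :
    derivedSub n ⇑σ (qSub n R σ.toLinearMap)
      = qSub n R σ.toLinearMap ⊓
          Submodule.comap (trUR n) (Submodule.span k (gcSet R (· * ·) ⇑σ)) := by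
  refine le_antisymm ?_ fun M ⟨hMq, hMtr⟩ => ?_
  · rw [derivedSub, Submodule.span_le]
    rintro _ ⟨x, hx, y, hy, p, q, hpx, hqy, rfl⟩
    exact ⟨sub_mem (qSub_mul_mem hσ hx hy) (zsmul_mem (qSub_mul_mem hσ hy hx) _),
      trUR_supercommutator_mem_span hx hy hpx hqy⟩
  obtain _ | ⟨⟨i₀⟩⟩ := isEmpty_or_nonempty (Fin n)
  · exact Subsingleton.elim 0 M ▸ zero_mem _
  rw [eq_sum_evenSingle_add_sum_oddSingle hMq,
    ← sub_add_cancel (∑ i, ∑ j, oddSingle σ n i j (M (inl i) (inr j)))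
      (oddSingle σ n i₀ i₀ (trUR (k := k) n M))]
  exact add_mem
    (Submodule.sum_mem _ fun i _ => Submodule.sum_mem _ fun j _ =>
      evenSingle_mem_derivedSub hσ i j _)
    (add_mem (sum_oddSingle_sub_oddSingle_sum_diag_mem_derivedSub hσ _ i₀)
      (span_gcSet_le_comap_oddSingle hσ i₀ hMtr))

/-- For a unital associative superalgebra `R` over `k` (2 invertible) and `n ≥ 2`,
`sq_n(R) = [q_n(R), q_n(R)]` consists exactly of the matrices `[[A,B],[ρ(B),ρ(A)]] ∈ q_n(R)`
with `Tr(B) ∈ [R,R]`, the span of graded commutators of `R`. -/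
theorem sq_characterization (σ : R ≃ₐ[k] R) (hσ : ∀ a, σ (σ a) = a) (n : ℕ) (hn : 2 ≤ n) :
    derivedSub n ⇑σ (qSub n R σ.toLinearMap)
      = qSub n R σ.toLinearMap ⊓
          Submodule.comap (trUR n) (Submodule.span k (gcSet R (· * ·) ⇑σ)) :=
  sq_characterization_general σ hσ n
end

section
/- Let R be a unital associative superalgebra over k with 2 invertible. In ⟨R⊗Q1, R⊗Q1⟩, for all homogeneous a,b ∈ R: h(a⊗1, b⊗ν) = −(−1)^{|a||b|} h(b⊗1, a⊗ν). -/
open TensorProduct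

variable {k : Type} [CommRing k] [Invertible (2 : k)]
variable {R : Type} [Ring R] [Algebra k R]

/-- The submodule `I_A ⊆ A ⊗ A` of relations for the first cyclic homology of a superalgebra
`A` (multiplication `mul`, grading involution `s`): it is spanned by the graded symmetry
relations `x ⊗ y + (-1)^{|x||y|} y ⊗ x` and the graded cyclic relations
`(-1)^{|x||z|} xy ⊗ z + (-1)^{|y||x|} yz ⊗ x + (-1)^{|z||y|} zx ⊗ y`
for homogeneous `x, y, z ∈ A`. -/
def cycRel (A : Type) [AddCommGroup A] [Module k A] (mul : A → A → A) (s : A → A) :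
    Submodule k (A ⊗[k] A) :=
  Submodule.span k
    {w | (∃ x y : A, ∃ px py : ZMod 2,
            s x = ((-1 : ℤ) ^ px.val) • x ∧ s y = ((-1 : ℤ) ^ py.val) • y ∧
            w = x ⊗ₜ[k] y + ((-1 : ℤ) ^ (px * py).val) • (y ⊗ₜ[k] x)) ∨
         (∃ x y z : A, ∃ px py pz : ZMod 2,
            s x = ((-1 : ℤ) ^ px.val) • x ∧ s y = ((-1 : ℤ) ^ py.val) • y ∧
            s z = ((-1 : ℤ) ^ pz.val) • z ∧
            w = ((-1 : ℤ) ^ (px * pz).val) • (mul x y ⊗ₜ[k] z)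
              + ((-1 : ℤ) ^ (py * px).val) • (mul y z ⊗ₜ[k] x)
              + ((-1 : ℤ) ^ (pz * py).val) • (mul z x ⊗ₜ[k] y))}

/-- `⟨x, y⟩`, the class of `x ⊗ y` in `⟨A, A⟩ = (A ⊗ A)/I_A`. -/
noncomputable def hcl (A : Type) [AddCommGroup A] [Module k A] (mul : A → A → A) (s : A → A) (x y : A) :
    (A ⊗[k] A) ⧸ cycRel (k := k) A mul s :=
  Submodule.Quotient.mk (x ⊗ₜ[k] y)

set_option linter.unusedSectionVars false
section aux

variable {k : Type} [CommRing k] [Invertible (2 : k)]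
variable {R : Type} [Ring R] [Algebra k R]
variable (σ : R ≃ₐ[k] R)

lemma sym_mem (x y : R × R) (px py : ZMod 2)
    (hx : tauQ σ x = ((-1 : ℤ) ^ px.val) • x)
    (hy : tauQ σ y = ((-1 : ℤ) ^ py.val) • y) :
    x ⊗ₜ[k] y + ((-1 : ℤ) ^ (px * py).val) • (y ⊗ₜ[k] x)
      ∈ cycRel (k := k) (R × R) (mulQ σ) (tauQ σ) :=
  Submodule.subset_span (Or.inl ⟨x, y, px, py, hx, hy, rfl⟩)

lemma cyc_mem (x y z : R × R) (px py pz : ZMod 2)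
    (hx : tauQ σ x = ((-1 : ℤ) ^ px.val) • x)
    (hy : tauQ σ y = ((-1 : ℤ) ^ py.val) • y)
    (hz : tauQ σ z = ((-1 : ℤ) ^ pz.val) • z) :
    ((-1 : ℤ) ^ (px * pz).val) • (mulQ σ x y ⊗ₜ[k] z)
      + ((-1 : ℤ) ^ (py * px).val) • (mulQ σ y z ⊗ₜ[k] x)
      + ((-1 : ℤ) ^ (pz * py).val) • (mulQ σ z x ⊗ₜ[k] y)
      ∈ cycRel (k := k) (R × R) (mulQ σ) (tauQ σ) :=
  Submodule.subset_span (Or.inr ⟨x, y, z, px, py, pz, hx, hy, hz, rfl⟩)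

lemma tau_left (c : R) (p : ZMod 2) (hc : σ c = ((-1 : ℤ) ^ p.val) • c) :
    tauQ σ ((c, (0 : R))) = ((-1 : ℤ) ^ p.val) • ((c, (0 : R))) := by
  simp [tauQ, hc, Prod.ext_iff]

lemma tau_right (c : R) (p : ZMod 2) (hc : σ c = ((-1 : ℤ) ^ p.val) • c) :
    tauQ σ (((0 : R), c)) = ((-1 : ℤ) ^ (p + 1).val) • (((0 : R), c)) := by
  have h : ∀ q : ZMod 2, ((-1 : ℤ) ^ (q + 1).val) = -((-1 : ℤ) ^ q.val) := by decide
  simp [tauQ, hc, h p, Prod.ext_iff]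

end aux

set_option linter.unusedSectionVars false
section emem
open TensorProduct
variable {k : Type} [CommRing k] [Invertible (2 : k)]
variable {R : Type} [Ring R] [Algebra k R]
variable (σ : R ≃ₐ[k] R)

lemma mk_neg_snd (x : R) : (((0 : R), -x) : R × R) = -(((0 : R), x) : R × R) := by
  simp [Prod.ext_iff]

lemma mk_neg_fst (x : R) : ((-x, (0 : R)) : R × R) = -((x, (0 : R)) : R × R) := by
  simp [Prod.ext_iff]

lemma tau_one : tauQ σ (((1 : R), (0 : R))) = ((-1 : ℤ) ^ (0 : ZMod 2).val) • (((1 : R), (0 : R))) :=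
  tau_left σ 1 0 (by simp)

lemma tau_nu : tauQ σ (((0 : R), (1 : R))) = ((-1 : ℤ) ^ (1 : ZMod 2).val) • (((0 : R), (1 : R))) := by
  have := tau_right σ (1 : R) 0 (by simp)
  simpa using this

lemma zmod2_cases (p : ZMod 2) : p = 0 ∨ p = 1 := by
  have h : ∀ q : ZMod 2, q = 0 ∨ q = 1 := by decide
  exact h p

lemma E_mem (c : R) (p : ZMod 2) (hc : σ c = ((-1 : ℤ) ^ p.val) • c) :
    ((c, (0:R)) : R × R) ⊗ₜ[k] (((0:R), (1:R)) : R × R)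
      ∈ cycRel (k := k) (R × R) (mulQ σ) (tauQ σ) := by
  set I := cycRel (k := k) (R × R) (mulQ σ) (tauQ σ) with hI
  set X : (R × R) ⊗[k] (R × R) := ((c, (0:R)) : R × R) ⊗ₜ[k] (((0:R), (1:R)) : R × R) with hX
  set Y : (R × R) ⊗[k] (R × R) := (((1:R), (0:R)) : R × R) ⊗ₜ[k] (((0:R), c) : R × R) with hY
  set Z : (R × R) ⊗[k] (R × R) := (((0:R), c) : R × R) ⊗ₜ[k] (((1:R), (0:R)) : R × R) with hZ
  have h1 := cyc_mem σ ((1:R),(0:R)) ((1:R),(0:R)) ((0:R), c) 0 0 (p+1)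
      (tau_one σ) (tau_one σ) (tau_right σ c p hc)
  have h2 := sym_mem σ ((1:R),(0:R)) ((0:R), c) 0 (p+1) (tau_one σ) (tau_right σ c p hc)
  simp only [mulQ, mul_one, one_mul, mul_zero, zero_mul, map_zero, map_one, add_zero,
    zero_add, ZMod.val_zero, pow_zero, one_smul, ← hY, ← hZ, ← hI] at h1 h2
  -- h1 : Y + Z + Z ∈ I, h2 : Y + Z ∈ I
  have h3 : Z ∈ I := by
    have h := Submodule.sub_mem I h1 h2
    rwa [add_sub_cancel_left] at h
  have h4 : Y ∈ I := by
    have h := Submodule.sub_mem I h2 h3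
    rwa [add_sub_cancel_right] at h
  have h6 : X + X ∈ I := by
    rcases zmod2_cases p with hp | hp
    · subst hp
      have hc' : σ c = c := by simpa using hc
      have h5 := cyc_mem σ ((0:R), c) ((0:R),(1:R)) ((0:R),(1:R)) 1 1 1
        (by simpa using tau_right σ c 0 hc) (tau_nu σ) (tau_nu σ)
      simp only [mulQ, mul_one, one_mul, mul_zero, zero_mul, map_zero, map_one, add_zero,
        zero_add, hc', ZMod.val_one, pow_one, neg_smul, one_smul, mul_zero,
        show ((1:ZMod 2) * 1) = 1 from rfl, ← hX, ← hY, ← hI] at h5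
      -- h5 : -X + -Y + -X ∈ I
      have h := Submodule.neg_mem I (Submodule.add_mem I h5 h4)
      have heq : -(-X + -Y + -X + Y) = X + X := by abel
      rwa [heq] at h
    · subst hp
      have hc' : σ c = -c := by simpa [ZMod.val_one] using hc
      have h5 := cyc_mem σ ((0:R), c) ((0:R),(1:R)) ((0:R),(1:R)) 0 1 1
        (by simpa [show ((1:ZMod 2)+1) = 0 from rfl] using tau_right σ c 1 hc) (tau_nu σ) (tau_nu σ)
      simp only [mulQ, mul_one, one_mul, mul_zero, zero_mul, map_zero, map_one, add_zero,
        zero_add, hc', mk_neg_fst, neg_tmul, ZMod.val_one, ZMod.val_zero, pow_one, pow_zero,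
        neg_smul, one_smul, neg_neg,
        show ((0:ZMod 2) * 1) = 0 from rfl, show ((1:ZMod 2) * 0) = 0 from rfl,
        show ((1:ZMod 2) * 1) = 1 from rfl, ← hX, ← hY, ← hI] at h5
      -- h5 : X + Y + X ∈ I
      have h := Submodule.sub_mem I h5 h4
      have heq : X + Y + X - Y = X + X := by abel
      rwa [heq] at h
  have hX2 : X = (⅟2 : k) • (X + X) := by rw [← two_smul k, invOf_smul_smul]
  rw [hX2]
  exact Submodule.smul_mem I _ h6

end emem

section main
open TensorProduct
variable {k : Type} [CommRing k] [Invertible (2 : k)]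
variable {R : Type} [Ring R] [Algebra k R]

set_option linter.unusedSectionVars false in
lemma T_mem (σ : R ≃ₐ[k] R) (a b : R) (pa pb : ZMod 2)
    (ha : σ a = ((-1 : ℤ) ^ pa.val) • a) (hb : σ b = ((-1 : ℤ) ^ pb.val) • b) :
    ((a, (0:R)) : R × R) ⊗ₜ[k] (((0:R), b) : R × R)
      + ((-1 : ℤ) ^ (pa * pb).val) • (((b, (0:R)) : R × R) ⊗ₜ[k] (((0:R), a) : R × R))
      ∈ cycRel (k := k) (R × R) (mulQ σ) (tauQ σ) := by
  set I := cycRel (k := k) (R × R) (mulQ σ) (tauQ σ) with hI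
  set u1 : (R × R) ⊗[k] (R × R) := ((a, (0:R)) : R × R) ⊗ₜ[k] (((0:R), b) : R × R) with hu1
  set u2 : (R × R) ⊗[k] (R × R) := ((b, (0:R)) : R × R) ⊗ₜ[k] (((0:R), a) : R × R) with hu2
  set v1 : (R × R) ⊗[k] (R × R) := (((0:R), b) : R × R) ⊗ₜ[k] ((a, (0:R)) : R × R) with hv1
  set v2 : (R × R) ⊗[k] (R × R) := (((0:R), a) : R × R) ⊗ₜ[k] ((b, (0:R)) : R × R) with hv2
  set e : (R × R) ⊗[k] (R × R) := ((a * b, (0:R)) : R × R) ⊗ₜ[k] (((0:R), (1:R)) : R × R) with he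
  have hS1 := sym_mem σ ((a,(0:R))) (((0:R),b)) pa (pb+1) (tau_left σ a pa ha) (tau_right σ b pb hb)
  have hS2 := sym_mem σ ((b,(0:R))) (((0:R),a)) pb (pa+1) (tau_left σ b pb hb) (tau_right σ a pa ha)
  have hC5 := cyc_mem σ ((a,(0:R))) ((b,(0:R))) (((0:R),(1:R))) pa pb 1
      (tau_left σ a pa ha) (tau_left σ b pb hb) (tau_nu σ)
  rcases zmod2_cases pa with hpa | hpa <;> rcases zmod2_cases pb with hpb | hpb <;> subst hpa <;> subst hpb
  · -- pa = 0, pb = 0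
    have ha' : σ a = a := by simpa using ha
    have hb' : σ b = b := by simpa using hb
    have hE : e ∈ I := E_mem σ (a * b) 0 (by simp [map_mul, ha', hb'])
    simp only [mulQ, mul_zero, zero_mul, mul_one, one_mul, map_zero, map_one, add_zero, zero_add,
      ha', show ((0:ZMod 2)*(0+1)) = 0 from rfl, show ((0:ZMod 2)*(0:ZMod 2)) = 0 from rfl,
      show ((0:ZMod 2)*(1:ZMod 2)) = 0 from rfl, show ((1:ZMod 2)*(0:ZMod 2)) = 0 from rfl,
      ZMod.val_zero, pow_zero, one_smul,
      ← hu1, ← hu2, ← hv1, ← hv2, ← he, ← hI] at hS1 hS2 hC5 ⊢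
    have hc := Submodule.add_mem I (Submodule.sub_mem I (Submodule.add_mem I hS1 hS2) hC5) hE
    have heq : u1 + u2 = u1 + v1 + (u2 + v2) - (e + v1 + v2) + e := by abel
    rwa [heq]
  · -- pa = 0, pb = 1
    have ha' : σ a = a := by simpa using ha
    have hb' : σ b = -b := by simpa [ZMod.val_one] using hb
    have hE : e ∈ I := E_mem σ (a * b) 1 (by simp [map_mul, ha', hb', ZMod.val_one, mul_neg])
    simp only [mulQ, mul_zero, zero_mul, mul_one, one_mul, map_zero, map_one, add_zero, zero_add,
      ha', mk_neg_snd, neg_tmul, show ((0:ZMod 2)*(1+1)) = 0 from rfl,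
      show ((1:ZMod 2)*(0+1)) = 1 from rfl, show ((0:ZMod 2)*(1:ZMod 2)) = 0 from rfl,
      show ((1:ZMod 2)*(0:ZMod 2)) = 0 from rfl, show ((1:ZMod 2)*(1:ZMod 2)) = 1 from rfl,
      ZMod.val_zero, ZMod.val_one, pow_zero, pow_one, one_smul, neg_smul, neg_neg,
      ← hu1, ← hu2, ← hv1, ← hv2, ← he, ← hI] at hS1 hS2 hC5 ⊢
    -- hS1 : u1 + v1 ∈ I, hS2 : u2 + -v2 ∈ I, hC5 : e + v1 + -v2 ∈ I, goal u1 + u2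
    have hc := Submodule.add_mem I (Submodule.sub_mem I (Submodule.add_mem I hS1 hS2) hC5) hE
    have heq : u1 + u2 = u1 + v1 + (u2 + -v2) - (e + v1 + -v2) + e := by abel
    rwa [heq]
  · -- pa = 1, pb = 0
    have ha' : σ a = -a := by simpa [ZMod.val_one] using ha
    have hb' : σ b = b := by simpa using hb
    have hE : e ∈ I := E_mem σ (a * b) 1 (by simp [map_mul, ha', hb', ZMod.val_one, neg_mul])
    simp only [mulQ, mul_zero, zero_mul, mul_one, one_mul, map_zero, map_one, add_zero, zero_add,
      ha', mk_neg_snd, neg_tmul, show ((1:ZMod 2)*(0+1)) = 1 from rfl,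
      show ((0:ZMod 2)*(1+1)) = 0 from rfl, show ((0:ZMod 2)*(1:ZMod 2)) = 0 from rfl,
      show ((1:ZMod 2)*(0:ZMod 2)) = 0 from rfl, show ((1:ZMod 2)*(1:ZMod 2)) = 1 from rfl,
      ZMod.val_zero, ZMod.val_one, pow_zero, pow_one, one_smul, neg_smul, neg_neg,
      ← hu1, ← hu2, ← hv1, ← hv2, ← he, ← hI] at hS1 hS2 hC5 ⊢
    -- hS1 : u1 + -v1 ∈ I, hS2 : u2 + v2 ∈ I, hC5 : -e + v1 + -v2 ∈ I, goal u1 + u2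
    have hc := Submodule.add_mem I (Submodule.add_mem I (Submodule.add_mem I hS1 hS2) hC5) hE
    have heq : u1 + u2 = u1 + -v1 + (u2 + v2) + (-e + v1 + -v2) + e := by abel
    rwa [heq]
  · -- pa = 1, pb = 1
    have ha' : σ a = -a := by simpa [ZMod.val_one] using ha
    have hb' : σ b = -b := by simpa [ZMod.val_one] using hb
    have hE : e ∈ I := E_mem σ (a * b) 0
      (by simp [map_mul, ha', hb', neg_mul, mul_neg, neg_neg])
    simp only [mulQ, mul_zero, zero_mul, mul_one, one_mul, map_zero, map_one, add_zero, zero_add,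
      ha', mk_neg_snd, neg_tmul, show ((1:ZMod 2)*(1+1)) = 0 from rfl,
      show ((1:ZMod 2)*(1:ZMod 2)) = 1 from rfl,
      ZMod.val_zero, ZMod.val_one, pow_zero, pow_one, one_smul, neg_smul, neg_neg,
      ← hu1, ← hu2, ← hv1, ← hv2, ← he, ← hI] at hS1 hS2 hC5 ⊢
    -- hS1 : u1 + v1 ∈ I, hS2 : u2 + v2 ∈ I, hC5 : -e + -v1 + v2 ∈ I, goal u1 + -u2
    have hc := Submodule.add_mem I (Submodule.add_mem I (Submodule.sub_mem I hS1 hS2) hC5) hE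
    have heq : u1 + -u2 = u1 + v1 - (u2 + v2) + (-e + -v1 + v2) + e := by abel
    rwa [heq]

end main

/-- In `⟨R⊗Q1, R⊗Q1⟩`, for homogeneous `a, b ∈ R` (parities `pa, pb`),
`h(a⊗1, b⊗ν) = -(-1)^{|a||b|} h(b⊗1, a⊗ν)`. -/
theorem hcl_skew (σ : R ≃ₐ[k] R) (hσ : ∀ a, σ (σ a) = a) (a b : R) (pa pb : ZMod 2)
    (ha : σ a = ((-1 : ℤ) ^ pa.val) • a) (hb : σ b = ((-1 : ℤ) ^ pb.val) • b) :
    hcl (k := k) (R × R) (mulQ σ) (tauQ σ) (a, 0) (0, b)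
      = -(((-1 : ℤ) ^ (pa * pb).val) •
          hcl (k := k) (R × R) (mulQ σ) (tauQ σ) (b, 0) (0, a)) := by
  have hT := T_mem σ a b pa pb ha hb
  unfold hcl
  rw [← Submodule.Quotient.mk_smul, ← Submodule.Quotient.mk_neg, Submodule.Quotient.eq]
  simpa [sub_neg_eq_add] using hT
end
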